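/- arXiv:2102.07987 — 2 statements merged into one kernel-verified Lean document; each statement's English description precedes it below -/
import Mathlib

section
/- Let A_1,...,A_T be vectors in R^d with ||A_t||_2 ≤ 1, λ ≥ 1, and define Σ_t^{-1} = λI_d + Σ_{τ=1}^{t-1} A_τ A_τ^T. Then Σ_{t=1}^T A_t^T Σ_t A_t ≤ 2 log(det Σ_1 / det Σ_{T+1}) ≤ 2d log(1 + T/(λd)). -/
/-!
With `V t = λ I + ∑_{τ < t} A τ A τᵀ`, the matrix determinant lemma gives
`det V (t+1) = det V t * (1 + u t)` for the potential `u t = A tᵀ (V t)⁻¹ A t`, so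
`∑ log (1 + u t)` telescopes to `log (det V T / det V 0)`. Since `V t ≥ λ I ≥ I` and
`‖A t‖ ≤ 1`, each `u t` lies in `[0, 1]`, where `u ≤ 2 log (1 + u)`. For the second bound,
AM–GM on the eigenvalues gives `det V T ≤ (tr V T / d) ^ d ≤ (λ + T / d) ^ d`, against
`det V 0 = λ ^ d`.
-/
open Matrix

theorem Real.prod_le_sum_div_card_pow {ι : Type*} (s : Finset ι) (z : ι → ℝ)
    (hz : ∀ i ∈ s, 0 ≤ z i) : ∏ i ∈ s, z i ≤ ((∑ i ∈ s, z i) / s.card) ^ s.card := by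
  rcases s.eq_empty_or_nonempty with rfl | hs
  · simp
  have hcard : (0 : ℝ) < s.card := by exact_mod_cast hs.card_pos
  have amgm := Real.geom_mean_le_arith_mean_weighted s (fun _ => (s.card : ℝ)⁻¹) z
    (fun _ _ => by positivity) (by simp [hcard.ne']) hz
  rw [Real.finsetProd_rpow s z hz, ← Finset.mul_sum, inv_mul_eq_div] at amgm
  calc ∏ i ∈ s, z i = ((∏ i ∈ s, z i) ^ (s.card : ℝ)⁻¹) ^ s.card :=
        (Real.rpow_inv_natCast_pow (Finset.prod_nonneg hz) hs.card_pos.ne').symm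
    _ ≤ _ := pow_le_pow_left₀ (Real.rpow_nonneg (Finset.prod_nonneg hz) _) amgm _

theorem Real.le_two_mul_log_one_add {u : ℝ} (h0 : 0 ≤ u) (h1 : u ≤ 1) :
    u ≤ 2 * Real.log (1 + u) := by
  have hlog := Real.one_sub_inv_le_log_of_pos (x := 1 + u) (by linarith)
  have hhalf : u / 2 ≤ 1 - (1 + u)⁻¹ := by
    rw [show 1 - (1 + u)⁻¹ = u / (1 + u) by field_simp; ring]
    gcongr
    linarith
  linarith

namespace Matrix

variable {n : Type*} [Fintype n] [DecidableEq n]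

theorem det_add_vecMulVec {R : Type*} [CommRing R] {M : Matrix n n R} (hM : IsUnit M.det)
    (u v : n → R) : (M + vecMulVec u v).det = M.det * (1 + v ⬝ᵥ (M⁻¹ *ᵥ u)) := by
  rw [vecMulVec_eq Unit, det_add_replicateCol_mul_replicateRow hM, Matrix.mul_assoc,
    ← replicateCol_mulVec]
  congr 1
  rw [det_unique, add_apply, one_apply_eq, replicateRow_mul_replicateCol_apply]

theorem PosSemidef.det_le_trace_div_card_pow {M : Matrix n n ℝ} (hM : M.PosSemidef) :
    M.det ≤ (M.trace / Fintype.card n) ^ Fintype.card n := by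
  rw [hM.isHermitian.det_eq_prod_eigenvalues, hM.isHermitian.trace_eq_sum_eigenvalues]
  exact Real.prod_le_sum_div_card_pow _ _ fun i _ => hM.eigenvalues_nonneg i

theorem dotProduct_inv_mulVec_le {M : Matrix n n ℝ} {c : ℝ} (hc : 0 < c)
    (hM : (M - c • 1).PosSemidef) (v : n → ℝ) :
    v ⬝ᵥ (M⁻¹ *ᵥ v) ≤ (v ⬝ᵥ v) / c := by
  have hMpos : M.PosDef := by
    simpa using (PosDef.one.smul hc).add_posSemidef hM
  set y := M⁻¹ *ᵥ v
  have hy : M *ᵥ y = v := by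
    rw [mulVec_mulVec, mul_nonsing_inv _ hMpos.det_pos.ne'.isUnit, one_mulVec]
  have hquad : c * (y ⬝ᵥ y) ≤ v ⬝ᵥ y := by
    have := hM.dotProduct_mulVec_nonneg y
    simp only [star_trivial, sub_mulVec, dotProduct_sub, smul_mulVec, one_mulVec,
      dotProduct_smul, hy, smul_eq_mul, dotProduct_comm y v] at this
    linarith
  -- `0 ≤ ‖v - c • y‖²`, expanded and combined with `c ‖y‖² ≤ v ⬝ᵥ y`, gives `c (v ⬝ᵥ y) ≤ ‖v‖²`.
  have hsq : 0 ≤ (v - c • y) ⬝ᵥ (v - c • y) := dotProduct_self_star_nonneg _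
  simp only [sub_dotProduct, dotProduct_sub, smul_dotProduct, dotProduct_smul, smul_eq_mul,
    dotProduct_comm y v] at hsq
  rw [le_div_iff₀ hc]
  nlinarith

end Matrix

section Design

variable {n : Type*} [DecidableEq n] (lam : ℝ) (A : ℕ → n → ℝ)

def designMatrix (t : ℕ) : Matrix n n ℝ :=
  lam • 1 + ∑ τ ∈ Finset.range t, vecMulVec (A τ) (A τ)

theorem designMatrix_zero : designMatrix lam A 0 = lam • 1 := by
  simp [designMatrix]

theorem designMatrix_succ (t : ℕ) :
    designMatrix lam A (t + 1) = designMatrix lam A t + vecMulVec (A t) (A t) := by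
  simp only [designMatrix, Finset.sum_range_succ, add_assoc]

variable [Fintype n]

noncomputable def ellipticalPotential (t : ℕ) : ℝ :=
  A t ⬝ᵥ ((designMatrix lam A t)⁻¹ *ᵥ A t)

theorem trace_designMatrix (t : ℕ) :
    (designMatrix lam A t).trace = lam * Fintype.card n + ∑ τ ∈ Finset.range t, A τ ⬝ᵥ A τ := by
  simp [designMatrix, trace_sum]

theorem posSemidef_designMatrix_sub_smul_one (t : ℕ) :
    (designMatrix lam A t - lam • 1).PosSemidef := by
  simpa [designMatrix] using posSemidef_sum _ fun τ _ => posSemidef_vecMulVec_self_star (A τ)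

variable {lam}

theorem posDef_designMatrix (hlam : 0 < lam) (t : ℕ) : (designMatrix lam A t).PosDef := by
  simpa using (PosDef.one.smul hlam).add_posSemidef (posSemidef_designMatrix_sub_smul_one lam A t)

theorem det_designMatrix_succ (hlam : 0 < lam) (t : ℕ) :
    (designMatrix lam A (t + 1)).det =
      (designMatrix lam A t).det * (1 + ellipticalPotential lam A t) := by
  rw [designMatrix_succ, det_add_vecMulVec (posDef_designMatrix A hlam t).det_pos.ne'.isUnit,
    ellipticalPotential]

theorem sum_log_one_add_ellipticalPotential (hlam : 0 < lam) (T : ℕ) :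
    ∑ t ∈ Finset.range T, Real.log (1 + ellipticalPotential lam A t) =
      Real.log ((designMatrix lam A T).det / (designMatrix lam A 0).det) := by
  have hdet t := (posDef_designMatrix A hlam t).det_pos.ne'
  rw [Real.log_div (hdet T) (hdet 0),
    ← Finset.sum_range_sub fun t => Real.log (designMatrix lam A t).det]
  refine Finset.sum_congr rfl fun t _ => ?_
  rw [← Real.log_div (hdet (t + 1)) (hdet t), det_designMatrix_succ A hlam,
    mul_div_cancel_left₀ _ (hdet t)]

theorem ellipticalPotential_nonneg (hlam : 0 < lam) (t : ℕ) :
    0 ≤ ellipticalPotential lam A t := by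
  simpa [ellipticalPotential] using
    (posDef_designMatrix A hlam t).inv.posSemidef.dotProduct_mulVec_nonneg (A t)

theorem ellipticalPotential_le_one (hA : ∀ t, A t ⬝ᵥ A t ≤ 1) (hlam : 1 ≤ lam) (t : ℕ) :
    ellipticalPotential lam A t ≤ 1 := by
  have hlam0 : 0 < lam := one_pos.trans_le hlam
  calc _ ≤ (A t ⬝ᵥ A t) / lam :=
        dotProduct_inv_mulVec_le hlam0 (posSemidef_designMatrix_sub_smul_one lam A t) (A t)
    _ ≤ 1 := div_le_one_of_le₀ ((hA t).trans hlam) hlam0.le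

theorem sum_ellipticalPotential_le_two_mul_log_det (hA : ∀ t, A t ⬝ᵥ A t ≤ 1) (hlam : 1 ≤ lam)
    (T : ℕ) :
    ∑ t ∈ Finset.range T, ellipticalPotential lam A t ≤
      2 * Real.log ((designMatrix lam A T).det / (designMatrix lam A 0).det) := by
  have hlam0 : 0 < lam := one_pos.trans_le hlam
  rw [← sum_log_one_add_ellipticalPotential A hlam0, Finset.mul_sum]
  exact Finset.sum_le_sum fun t _ => Real.le_two_mul_log_one_add
    (ellipticalPotential_nonneg A hlam0 t) (ellipticalPotential_le_one A hA hlam t)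

theorem log_det_designMatrix_div_le (hA : ∀ t, A t ⬝ᵥ A t ≤ 1) (hlam : 0 < lam) (T : ℕ) :
    Real.log ((designMatrix lam A T).det / (designMatrix lam A 0).det) ≤
      Fintype.card n * Real.log (1 + T / (lam * Fintype.card n)) := by
  set d := Fintype.card n
  have hV := posDef_designMatrix A hlam T
  have htrace : (designMatrix lam A T).trace / (lam * d) ≤ 1 + T / (lam * d) := by
    have hsum : ∑ τ ∈ Finset.range T, A τ ⬝ᵥ A τ ≤ T := by
      simpa using Finset.sum_le_sum fun τ (_ : τ ∈ Finset.range T) => hA τ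
    rw [trace_designMatrix, add_div, mul_comm lam]
    gcongr
    exact div_self_le_one _
  have hratio : (designMatrix lam A T).det / (designMatrix lam A 0).det ≤
      (1 + T / (lam * d)) ^ d := by
    rw [designMatrix_zero, det_smul, det_one, mul_one, div_le_iff₀ (by positivity)]
    calc (designMatrix lam A T).det ≤ ((designMatrix lam A T).trace / d) ^ d :=
          hV.posSemidef.det_le_trace_div_card_pow
      _ = ((designMatrix lam A T).trace / (lam * d)) ^ d * lam ^ d := by
          rw [← mul_pow, mul_comm lam, ← div_div, div_mul_cancel₀ _ hlam.ne']
      _ ≤ _ := by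
          have htrace_nonneg := hV.posSemidef.trace_nonneg
          gcongr
  calc _ ≤ Real.log ((1 + T / (lam * d)) ^ d) :=
        Real.log_le_log (div_pos hV.det_pos (posDef_designMatrix A hlam 0).det_pos) hratio
    _ = _ := Real.log_pow _ _

end Design

/-- Actions are indexed from 0: `Sig t` is the paper's `Σ_{t+1}`. -/
theorem elliptical_potential_classical_general {d T : ℕ}
    (A : ℕ → Fin d → ℝ) (hA : ∀ t, (A t) ⬝ᵥ (A t) ≤ 1)
    (lam : ℝ) (hlam : 1 ≤ lam)
    (Sig : ℕ → Matrix (Fin d) (Fin d) ℝ)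
    (hSig : ∀ t, Sig t = (lam • (1 : Matrix (Fin d) (Fin d) ℝ) +
      ∑ τ ∈ Finset.range t, Matrix.vecMulVec (A τ) (A τ))⁻¹) :
    (∑ t ∈ Finset.range T, (A t) ⬝ᵥ ((Sig t) *ᵥ (A t)) ≤
        2 * Real.log ((Sig 0).det / (Sig T).det)) ∧
    2 * Real.log ((Sig 0).det / (Sig T).det) ≤
        2 * d * Real.log (1 + T / (lam * d)) := by
  obtain rfl : Sig = fun t => (designMatrix lam A t)⁻¹ := funext hSig
  simp only [det_nonsing_inv, Ring.inverse_eq_inv', inv_div_inv]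
  refine ⟨sum_ellipticalPotential_le_two_mul_log_det A hA hlam T, ?_⟩
  have h := log_det_designMatrix_div_le A hA (one_pos.trans_le hlam) T
  rw [Fintype.card_fin] at h
  linarith

/-- Classical elliptical potential lemma (actions indexed from 0, so that
`Σ t = (λ I + ∑_{τ<t} A_τ A_τᵀ)⁻¹` plays the role of `Σ_{t+1}` in 1-based notation). -/
theorem elliptical_potential_classical {d T : ℕ} (hd : 0 < d)
    (A : ℕ → Fin d → ℝ) (hA : ∀ t, (A t) ⬝ᵥ (A t) ≤ 1)
    (lam : ℝ) (hlam : 1 ≤ lam)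
    (Sig : ℕ → Matrix (Fin d) (Fin d) ℝ)
    (hSig : ∀ t, Sig t = (lam • (1 : Matrix (Fin d) (Fin d) ℝ) +
      ∑ τ ∈ Finset.range t, Matrix.vecMulVec (A τ) (A τ))⁻¹) :
    (∑ t ∈ Finset.range T, (A t) ⬝ᵥ ((Sig t) *ᵥ (A t)) ≤
        2 * Real.log ((Sig 0).det / (Sig T).det)) ∧
    2 * Real.log ((Sig 0).det / (Sig T).det) ≤
        2 * d * Real.log (1 + T / (lam * d)) :=
  elliptical_potential_classical_general A hA lam hlam Sig hSig
end

section
/- Let Σ be a positive semidefinite d×d matrix, V ∈ R^d, x > 0, and define Σ' := Σ − (Σ V V^T Σ)/(1 + V^T Σ V). Then log(1 + V^T Σ V) + log det(I + x Σ') ≤ log det(I + (x + V^T V) Σ). -/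
/-!
Put `P = x • 1 + V Vᵀ`. The updated covariance is `Σ' = Σ (1 + V Vᵀ Σ)⁻¹` (Sherman–Morrison), so
`(1 + x Σ') (1 + V Vᵀ Σ) = 1 + P Σ`; as `det (1 + V Vᵀ Σ) = 1 + Vᵀ Σ V`, the left-hand side is
`log det (1 + P Σ)`. Cauchy–Schwarz gives `V Vᵀ ≤ (Vᵀ V) • 1` in the Loewner order, and
`P ↦ det (1 + P Σ) = det (1 + B P Bᵀ)` (where `Σ = Bᵀ B`) is monotone because the determinant is
monotone on positive definite matrices.
-/

open Matrix

open scoped MatrixOrder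

theorem mul_one_add_eq_one_of_mul_self_eq_smul {K A : Type*} [Field K] [Ring A] [Algebra K A]
    {Q : A} {t : K} (hQ : Q * Q = t • Q) (ht : 1 + t ≠ 0) :
    (1 - (1 + t)⁻¹ • Q) * (1 + Q) = 1 := by
  rw [sub_mul, one_mul, mul_add, mul_one, smul_mul_assoc, hQ, smul_smul, ← add_smul,
    ← mul_one_add, inv_mul_cancel₀ ht, one_smul, add_sub_cancel_right]

namespace Matrix

variable {n : Type*} [Fintype n]

theorem vecMulVec_mul_mul_vecMulVec_mul {R : Type*} [CommRing R] (u v : n → R)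
    (S : Matrix n n R) :
    vecMulVec u v * S * (vecMulVec u v * S) = (v ⬝ᵥ S *ᵥ u) • (vecMulVec u v * S) := by
  rw [vecMulVec_mul, vecMulVec_mul_vecMulVec, vecMulVec_smul, ← dotProduct_mulVec]

variable [DecidableEq n]

theorem det_one_add_vecMulVec_mul {R : Type*} [CommRing R] (u v : n → R) (S : Matrix n n R) :
    (1 + vecMulVec u v * S).det = 1 + v ⬝ᵥ S *ᵥ u := by
  rw [vecMulVec_mul, vecMulVec_eq Unit, det_one_add_replicateCol_mul_replicateRow,
    dotProduct_mulVec]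

theorem det_one_add_smul_sub_vecMulVec {K : Type*} [Field K] (u v : n → K) (S : Matrix n n K)
    (x : K) (hc : 1 + v ⬝ᵥ S *ᵥ u ≠ 0) :
    (1 + v ⬝ᵥ S *ᵥ u) * (1 + x • (S - (1 + v ⬝ᵥ S *ᵥ u)⁻¹ • (S * vecMulVec u v * S))).det =
      (1 + (x • 1 + vecMulVec u v) * S).det := by
  have hinv := mul_one_add_eq_one_of_mul_self_eq_smul (vecMulVec_mul_mul_vecMulVec_mul u v S) hc
  have hupdate : S - (1 + v ⬝ᵥ S *ᵥ u)⁻¹ • (S * vecMulVec u v * S) =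
      S * (1 - (1 + v ⬝ᵥ S *ᵥ u)⁻¹ • (vecMulVec u v * S)) := by
    rw [mul_sub, mul_one, mul_smul_comm, Matrix.mul_assoc]
  have hfactor : (1 + x • (S - (1 + v ⬝ᵥ S *ᵥ u)⁻¹ • (S * vecMulVec u v * S))) *
      (1 + vecMulVec u v * S) = 1 + (x • 1 + vecMulVec u v) * S := by
    rw [hupdate, add_mul, one_mul, smul_mul_assoc, Matrix.mul_assoc, hinv, mul_one, add_mul,
      smul_mul_assoc, one_mul]
    abel
  rw [← hfactor, det_mul, det_one_add_vecMulVec_mul, mul_comm]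

theorem one_le_det_of_one_le {A : Matrix n n ℝ} (h : 1 ≤ A) : 1 ≤ A.det := by
  have hA : A.IsHermitian := by
    simpa using (le_iff.mp h).isHermitian.add isHermitian_one
  have hspec := (algebraMap_le_iff_le_spectrum (r := (1 : ℝ)) hA.isSelfAdjoint).mp
    (by simpa using h)
  rw [hA.det_eq_prod_eigenvalues]
  exact Finset.one_le_prod fun i _ => by simpa using hspec _ (hA.eigenvalues_mem_spectrum_real i)

theorem PosDef.det_le_det_of_le {P Q : Matrix n n ℝ} (hP : P.PosDef) (hPQ : P ≤ Q) :
    P.det ≤ Q.det := by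
  obtain ⟨y, hy, rfl⟩ :=
    CStarAlgebra.isStrictlyPositive_iff_eq_star_mul_self.mp hP.isStrictlyPositive
  obtain ⟨z, hyz⟩ := hy.exists_right_inv
  have hdet : y.det * z.det = 1 := by rw [← det_mul, hyz, det_one]
  have hconj : 1 ≤ star z * Q * z :=
    calc (1 : Matrix n n ℝ) = star (y * z) * (y * z) := by rw [hyz, star_one, one_mul]
      _ = star z * (star y * y) * z := by simp only [star_mul, Matrix.mul_assoc]
      _ ≤ star z * Q * z := star_left_conjugate_le_conjugate hPQ z
  have h1 := one_le_det_of_one_le hconj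
  simp only [det_mul, star_eq_conjTranspose, det_conjTranspose, star_trivial] at h1 ⊢
  calc y.det * y.det ≤ y.det * y.det * (z.det * Q.det * z.det) :=
        le_mul_of_one_le_right (mul_self_nonneg _) h1
    _ = (y.det * z.det) * (y.det * z.det) * Q.det := by ring
    _ = Q.det := by rw [hdet, one_mul, one_mul]

theorem vecMulVec_self_le_dotProduct_smul_one (v : n → ℝ) : vecMulVec v v ≤ (v ⬝ᵥ v) • 1 := by
  have hv : vecMulVec v v = vecMulVec v (star v) := by rw [star_trivial]
  refine le_iff.mpr (.of_dotProduct_mulVec_nonneg ?_ fun y => ?_)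
  · rw [hv]
    exact (isHermitian_one.smul (.all _)).sub (posSemidef_vecMulVec_self_star v).isHermitian
  · have hcs : (v ⬝ᵥ y) ^ 2 ≤ (v ⬝ᵥ v) * (y ⬝ᵥ y) := by
      simpa only [dotProduct, ← sq] using Finset.sum_mul_sq_le_sq_mul_sq Finset.univ v y
    simp only [star_trivial, sub_mulVec, smul_mulVec, one_mulVec, vecMulVec_mulVec,
      MulOpposite.smul_eq_mul_unop, MulOpposite.unop_op, dotProduct_sub, dotProduct_smul,
      smul_eq_mul, dotProduct_comm y v]
    linarith

theorem det_one_add_mul_star_mul_comm (P B : Matrix n n ℝ) :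
    (1 + P * (star B * B)).det = (1 + B * P * star B).det := by
  rw [← Matrix.mul_assoc, det_one_add_mul_comm, Matrix.mul_assoc]

theorem det_one_add_mul_pos {P S : Matrix n n ℝ} (hP : 0 ≤ P) (hS : 0 ≤ S) :
    0 < (1 + P * S).det := by
  obtain ⟨B, rfl⟩ := CStarAlgebra.nonneg_iff_eq_star_mul_self.mp hS
  rw [det_one_add_mul_star_mul_comm]
  exact (PosDef.one.add_posSemidef (star_right_conjugate_nonneg hP B).posSemidef).det_pos

theorem det_one_add_mul_le_det_one_add_mul {P Q S : Matrix n n ℝ} (hP : 0 ≤ P) (hPQ : P ≤ Q)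
    (hS : 0 ≤ S) : (1 + P * S).det ≤ (1 + Q * S).det := by
  obtain ⟨B, rfl⟩ := CStarAlgebra.nonneg_iff_eq_star_mul_self.mp hS
  simp only [det_one_add_mul_star_mul_comm]
  exact PosDef.det_le_det_of_le
    (PosDef.one.add_posSemidef (star_right_conjugate_nonneg hP B).posSemidef)
    (add_le_add_right (star_right_conjugate_le_conjugate hPQ B) 1)

end Matrix

/-- Log-det superadditivity under the rank-one Bayesian covariance update. -/
theorem logdet_rank_one_update {d : ℕ} {S : Matrix (Fin d) (Fin d) ℝ}
    (hS : S.PosSemidef) (V : Fin d → ℝ) (x : ℝ) (hx : 0 < x) :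
    Real.log (1 + V ⬝ᵥ (S *ᵥ V)) +
      Real.log ((1 + x • (S - (1 + V ⬝ᵥ (S *ᵥ V))⁻¹ •
        (S * Matrix.vecMulVec V V * S))).det) ≤
    Real.log ((1 + (x + V ⬝ᵥ V) • S).det) := by
  have hc : 0 < 1 + V ⬝ᵥ (S *ᵥ V) := by
    have := hS.dotProduct_mulVec_nonneg V
    rw [star_trivial] at this
    linarith
  have hP : 0 ≤ x • (1 : Matrix (Fin d) (Fin d) ℝ) + vecMulVec V V := by
    have := (PosSemidef.one.smul hx.le).add (posSemidef_vecMulVec_self_star V)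
    rw [star_trivial] at this
    exact this.nonneg
  have hPQ : x • 1 + vecMulVec V V ≤ (x + V ⬝ᵥ V) • (1 : Matrix (Fin d) (Fin d) ℝ) := by
    rw [add_smul]
    exact add_le_add_right (vecMulVec_self_le_dotProduct_smul_one V) _
  have hkey := det_one_add_smul_sub_vecMulVec V V S x hc.ne'
  have hpos := det_one_add_mul_pos hP hS.nonneg
  have hdet_pos : 0 < (1 + x • (S - (1 + V ⬝ᵥ (S *ᵥ V))⁻¹ •
      (S * Matrix.vecMulVec V V * S))).det := pos_of_mul_pos_right (hkey ▸ hpos) hc.le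
  rw [← Real.log_mul hc.ne' hdet_pos.ne', hkey]
  refine Real.log_le_log hpos ?_
  simpa only [smul_one_mul] using det_one_add_mul_le_det_one_add_mul hP hPQ hS.nonneg
end
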